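/- Let λ₁ > λ₂ and β₁ < β₂ be real numbers. For θ ∈ [0, π/2), define the 2×2 symmetric matrix D(θ) = V(θ) diag(β₁,β₂) V(θ)ᵀ − diag(λ₁,λ₂), where V(θ) is rotation by θ. Then for every θ ∈ (0, π/2), λ(D(θ)) is strictly majorized by λ(D(0)); i.e., λ(D(θ)) ≺ λ(D(0)) and λ(D(θ)) ≠ λ(D(0)). -/

import Mathlib

open Finset

/-- Decreasing rearrangement of a vector in ℝⁿ. -/
noncomputable def dsort {n : ℕ} (u : Fin n → ℝ) : Fin n → ℝ :=
  u ∘ Tuple.sort (fun i => -u i)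

/-- `Maj u v` : `u` is majorized by `v`. -/
def Maj {n : ℕ} (u v : Fin n → ℝ) : Prop :=
  (∀ k : ℕ, ∑ i ∈ univ.filter (fun i : Fin n => (i : ℕ) < k), dsort u i ≤
      ∑ i ∈ univ.filter (fun i : Fin n => (i : ℕ) < k), dsort v i) ∧
  ∑ i, u i = ∑ i, v i

open Matrix

/-- Decreasingly ordered eigenvalue vector of a real symmetric matrix. -/
noncomputable def specVec {n : ℕ} {A : Matrix (Fin n) (Fin n) ℝ} (hA : A.IsHermitian) :
    Fin n → ℝ :=
  dsort hA.eigenvalues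

/-- `A` and `B` strongly commute: a common orthonormal eigenbasis realizing both
decreasingly ordered spectra simultaneously. -/
def StrongCommute {n : ℕ} {A B : Matrix (Fin n) (Fin n) ℝ}
    (hA : A.IsHermitian) (hB : B.IsHermitian) : Prop :=
  ∃ U : Matrix (Fin n) (Fin n) ℝ, U * Uᵀ = 1 ∧
    Uᵀ * A * U = Matrix.diagonal (specVec hA) ∧
    Uᵀ * B * U = Matrix.diagonal (specVec hB)

/-- Rotation matrix by angle `θ`. -/
noncomputable def rot (θ : ℝ) : Matrix (Fin 2) (Fin 2) ℝ :=
  !![Real.cos θ, -Real.sin θ; Real.sin θ, Real.cos θ]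

/-- `D(θ) = V(θ) diag(β₁,β₂) V(θ)ᵀ − diag(λ₁,λ₂)`. -/
noncomputable def Dmat (β₁ β₂ l₁ l₂ θ : ℝ) : Matrix (Fin 2) (Fin 2) ℝ :=
  rot θ * Matrix.diagonal ![β₁, β₂] * (rot θ)ᵀ - Matrix.diagonal ![l₁, l₂]

/-!
The two eigenvalues of a symmetric 2×2 matrix are pinned down by its trace and determinant, and
their spread satisfies `(μ₀ - μ₁)² = tr² - 4 det`; so at fixed trace a larger determinant means a
strictly smaller top eigenvalue. Conjugating by a rotation does not change the trace of `D(θ)`, while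
`det D(θ) = (β₁ - l₁)(β₂ - l₂) + (β₂ - β₁)(l₁ - l₂) sin² θ` strictly exceeds `det D(0)` for
`0 < θ < π/2`. Equal sums and a strictly smaller top entry is strict majorization in `ℝ²`.
-/

open Real

theorem antitone_dsort {n : ℕ} (u : Fin n → ℝ) : Antitone (dsort u) :=
  fun _ _ hij => neg_le_neg_iff.mp (Tuple.monotone_sort (fun i => -u i) hij)

theorem dsort_eq_self_of_antitone {n : ℕ} {u : Fin n → ℝ} (hu : Antitone u) : dsort u = u := by
  rw [dsort, Tuple.sort_eq_refl_iff_monotone.2 fun _ _ hij => neg_le_neg (hu hij)]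
  rfl

theorem sum_dsort {n : ℕ} (u : Fin n → ℝ) : ∑ i, dsort u i = ∑ i, u i :=
  Equiv.sum_comp _ u

theorem prod_dsort {n : ℕ} (u : Fin n → ℝ) : ∏ i, dsort u i = ∏ i, u i :=
  Equiv.prod_comp _ u

theorem maj_of_antitone_fin_two {u v : Fin 2 → ℝ} (hu : Antitone u) (hv : Antitone v)
    (h0 : u 0 ≤ v 0) (hsum : ∑ i, u i = ∑ i, v i) : Maj u v := by
  refine ⟨fun k => ?_, hsum⟩
  rw [dsort_eq_self_of_antitone hu, dsort_eq_self_of_antitone hv]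
  rcases k with _ | _ | k
  · simp
  · simpa [filter_eq'] using h0
  · rw [filter_true_of_mem fun i _ => by omega]
    exact hsum.le

section specVec

variable {n : ℕ} {A : Matrix (Fin n) (Fin n) ℝ}

theorem antitone_specVec (hA : A.IsHermitian) : Antitone (specVec hA) :=
  antitone_dsort _

theorem sum_specVec (hA : A.IsHermitian) : ∑ i, specVec hA i = A.trace := by
  simp [specVec, sum_dsort, hA.trace_eq_sum_eigenvalues]

theorem prod_specVec (hA : A.IsHermitian) : ∏ i, specVec hA i = A.det := by
  simp [specVec, prod_dsort, hA.det_eq_prod_eigenvalues]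

end specVec

theorem lt_of_add_eq_of_mul_lt {a₀ a₁ b₀ b₁ : ℝ} (hb : b₁ ≤ b₀)
    (hsum : a₀ + a₁ = b₀ + b₁) (hprod : b₀ * b₁ < a₀ * a₁) : a₀ < b₀ := by
  have hspread : (a₀ - a₁) ^ 2 < (b₀ - b₁) ^ 2 := by
    linear_combination 4 * hprod + (a₀ + a₁ + b₀ + b₁) * hsum
  linarith [lt_of_pow_lt_pow_left₀ 2 (sub_nonneg.2 hb) hspread]

theorem specVec_zero_lt_of_trace_eq_of_det_lt {A B : Matrix (Fin 2) (Fin 2) ℝ}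
    (hA : A.IsHermitian) (hB : B.IsHermitian) (htr : A.trace = B.trace) (hdet : B.det < A.det) :
    specVec hA 0 < specVec hB 0 := by
  have hsum := sum_specVec hA ▸ sum_specVec hB ▸ htr
  have hprod := prod_specVec hA ▸ prod_specVec hB ▸ hdet
  rw [Fin.sum_univ_two, Fin.sum_univ_two] at hsum
  rw [Fin.prod_univ_two, Fin.prod_univ_two] at hprod
  exact lt_of_add_eq_of_mul_lt (antitone_specVec hB (Fin.zero_le 1)) hsum hprod

section Dmat

variable (β₁ β₂ l₁ l₂ θ : ℝ)

theorem Dmat_eq : Dmat β₁ β₂ l₁ l₂ θ =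
    !![β₁ * cos θ ^ 2 + β₂ * sin θ ^ 2 - l₁, (β₁ - β₂) * sin θ * cos θ;
       (β₁ - β₂) * sin θ * cos θ, β₁ * sin θ ^ 2 + β₂ * cos θ ^ 2 - l₂] := by
  ext i j
  fin_cases i <;> fin_cases j <;> simp [Dmat, rot, vecMul, dotProduct, Fin.sum_univ_two] <;> ring

theorem trace_Dmat : (Dmat β₁ β₂ l₁ l₂ θ).trace = β₁ + β₂ - l₁ - l₂ := by
  rw [Dmat_eq, trace_fin_two_of]
  linear_combination (β₁ + β₂) * sin_sq_add_cos_sq θ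

theorem det_Dmat : (Dmat β₁ β₂ l₁ l₂ θ).det =
    (β₁ - l₁) * (β₂ - l₂) + (β₂ - β₁) * (l₁ - l₂) * sin θ ^ 2 := by
  rw [Dmat_eq, det_fin_two_of]
  linear_combination
    (β₁ * β₂ * (sin θ ^ 2 + cos θ ^ 2 + 1) - β₁ * l₂ - β₂ * l₁) * sin_sq_add_cos_sq θ

end Dmat

theorem stmt15 (β₁ β₂ l₁ l₂ θ : ℝ) (hl : l₂ < l₁) (hb : β₁ < β₂)
    (hθ1 : 0 < θ) (hθ2 : θ < Real.pi / 2)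
    (hD : (Dmat β₁ β₂ l₁ l₂ θ).IsHermitian)
    (hD0 : (Dmat β₁ β₂ l₁ l₂ 0).IsHermitian) :
    Maj (specVec hD) (specVec hD0) ∧ specVec hD ≠ specVec hD0 := by
  have hsin : 0 < sin θ := sin_pos_of_pos_of_lt_pi hθ1 (by linarith [pi_pos])
  have htop : specVec hD 0 < specVec hD0 0 := by
    refine specVec_zero_lt_of_trace_eq_of_det_lt hD hD0 (by rw [trace_Dmat, trace_Dmat]) ?_
    rw [det_Dmat, det_Dmat, sin_zero]
    linarith [mul_pos (mul_pos (sub_pos.2 hb) (sub_pos.2 hl)) (pow_pos hsin 2)]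
  refine ⟨maj_of_antitone_fin_two (antitone_specVec hD) (antitone_specVec hD0) htop.le ?_,
    fun h => htop.ne (congrFun h 0)⟩
  rw [sum_specVec, sum_specVec, trace_Dmat, trace_Dmat]
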